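/- For every x in (0, π/2), cos^2 x < (163x^4 − 780x^2 + 945)/(13x^4 + 165x^2 + 945). -/

import Mathlib

/-!
Since cos² x = (1 + cos 2x) / 2, it suffices to bound cos 2x from above by a Taylor polynomial.
For t ≥ 0 the Taylor partial sums of cos and sin alternate around their limits: integrating
cos ≤ 1 and then each bound in turn flips the side of the next one. For the degree-12 Taylor
polynomial P of cos 2x, the Padé numerator minus (1 + P)/2 times the denominator is exactly
x¹⁰ times a cubic in x², which is positive for x² < 4.
-/

open Real Finset Nat

noncomputable def cosTaylor (n : ℕ) (t : ℝ) : ℝ :=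
  ∑ k ∈ range n, (-1) ^ k * t ^ (2 * k) / (2 * k)!

noncomputable def sinTaylor (n : ℕ) (t : ℝ) : ℝ :=
  ∑ k ∈ range n, (-1) ^ k * t ^ (2 * k + 1) / (2 * k + 1)!

theorem hasDerivAt_sinTaylor (n : ℕ) (t : ℝ) : HasDerivAt (sinTaylor n) (cosTaylor n t) t := by
  refine HasDerivAt.fun_sum fun k _ => ?_
  refine (((hasDerivAt_pow (2 * k + 1) t).const_mul ((-1 : ℝ) ^ k)).div_const
    ((2 * k + 1)! : ℝ)).congr_deriv ?_
  rw [Nat.factorial_succ]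
  push_cast
  field_simp

theorem hasDerivAt_cosTaylor_succ (n : ℕ) (t : ℝ) :
    HasDerivAt (cosTaylor (n + 1)) (-sinTaylor n t) t := by
  have h : cosTaylor (n + 1) =
      fun t => 1 + ∑ k ∈ range n, (-1 : ℝ) ^ (k + 1) * t ^ (2 * k + 2) / (2 * k + 2)! := by
    ext t
    simp [cosTaylor, sum_range_succ', mul_add, add_comm]
  rw [h, sinTaylor, ← sum_neg_distrib]
  refine (HasDerivAt.fun_sum fun k _ => ?_).const_add 1
  refine (((hasDerivAt_pow (2 * k + 2) t).const_mul ((-1 : ℝ) ^ (k + 1))).div_const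
    ((2 * k + 2)! : ℝ)).congr_deriv ?_
  rw [Nat.factorial_succ (2 * k + 1)]
  push_cast
  field_simp
  ring

theorem nonneg_of_hasDerivAt_nonneg {f f' : ℝ → ℝ} (hf : ∀ y, HasDerivAt f (f' y) y)
    (hf' : ∀ y, 0 ≤ y → 0 ≤ f' y) (h0 : f 0 = 0) {t : ℝ} (ht : 0 ≤ t) : 0 ≤ f t := by
  have hmono : MonotoneOn f (Set.Ici 0) :=
    monotoneOn_of_hasDerivWithinAt_nonneg (convex_Ici 0)
      (fun y _ => (hf y).continuousAt.continuousWithinAt)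
      (fun y _ => (hf y).hasDerivWithinAt)
      (fun y hy => hf' y (interior_subset hy))
  exact h0 ▸ hmono Set.self_mem_Ici ht ht

theorem cos_sin_taylor_alternating_bounds (n : ℕ) {t : ℝ} (ht : 0 ≤ t) :
    0 ≤ (-1) ^ (n + 1) * (cos t - cosTaylor (n + 1) t) ∧
      0 ≤ (-1) ^ (n + 1) * (sin t - sinTaylor (n + 1) t) := by
  induction n generalizing t with
  | zero =>
    simpa [cosTaylor, sinTaylor] using ⟨cos_le_one t, sin_le ht⟩
  | succ n ih =>
    have hcos {t : ℝ} (ht : 0 ≤ t) : 0 ≤ (-1) ^ (n + 2) * (cos t - cosTaylor (n + 2) t) :=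
      nonneg_of_hasDerivAt_nonneg (f := fun y => (-1) ^ (n + 2) * (cos y - cosTaylor (n + 2) y))
        (fun y => (((hasDerivAt_cos y).sub (hasDerivAt_cosTaylor_succ (n + 1) y)).const_mul
          _).congr_deriv (by ring))
        (fun y hy => (ih hy).2) (by simp [cosTaylor, sum_range_succ']) ht
    exact ⟨hcos ht, nonneg_of_hasDerivAt_nonneg
      (f := fun y => (-1) ^ (n + 2) * (sin y - sinTaylor (n + 2) y))
      (fun y => ((hasDerivAt_sin y).sub (hasDerivAt_sinTaylor (n + 2) y)).const_mul _)
      (fun y hy => hcos hy) (by simp [sinTaylor]) ht⟩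

theorem cos_le_cosTaylor_two_mul_add_one (m : ℕ) {t : ℝ} (ht : 0 ≤ t) :
    cos t ≤ cosTaylor (2 * m + 1) t := by
  have h := (cos_sin_taylor_alternating_bounds (2 * m) ht).1
  rw [pow_succ, pow_mul] at h
  norm_num at h
  linarith

theorem cosTaylor_seven_two_mul_lt_pade {x : ℝ} (hx : 0 < x) (hx2 : x < 2) :
    (1 / 2 + cosTaylor 7 (2 * x) / 2) * (13 * x ^ 4 + 165 * x ^ 2 + 945) <
      163 * x ^ 4 - 780 * x ^ 2 + 945 := by
  have hgap : 163 * x ^ 4 - 780 * x ^ 2 + 945 -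
      (1 / 2 + cosTaylor 7 (2 * x) / 2) * (13 * x ^ 4 + 165 * x ^ 2 + 945) =
      x ^ 10 * (59 / 315 - 229 / 10395 * x ^ 2 + 16 / 14175 * x ^ 4 - 26 / 467775 * x ^ 6) := by
    simp only [cosTaylor, sum_range_succ, sum_range_zero, factorial]
    push_cast
    ring
  have hx_sq : x ^ 2 < 4 := by nlinarith
  have hcubic : 0 < 59 / 315 - 229 / 10395 * x ^ 2 + 16 / 14175 * x ^ 4 - 26 / 467775 * x ^ 6 := by
    nlinarith [pow_pos hx 2, pow_pos hx 4, pow_pos hx 6]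
  have := mul_pos (pow_pos hx 10) hcubic
  linarith

theorem cos_sq_lt_pade (x : ℝ) (hx : 0 < x) (hx2 : x < Real.pi / 2) :
    Real.cos x ^ 2 <
      (163 * x ^ 4 - 780 * x ^ 2 + 945) / (13 * x ^ 4 + 165 * x ^ 2 + 945) := by
  have hx_lt_two : x < 2 := by linarith [pi_lt_four]
  rw [lt_div_iff₀ (by positivity), cos_sq x]
  calc (1 / 2 + cos (2 * x) / 2) * (13 * x ^ 4 + 165 * x ^ 2 + 945)
      ≤ (1 / 2 + cosTaylor 7 (2 * x) / 2) * (13 * x ^ 4 + 165 * x ^ 2 + 945) := by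
        gcongr
        exact cos_le_cosTaylor_two_mul_add_one 3 (by positivity)
    _ < 163 * x ^ 4 - 780 * x ^ 2 + 945 := cosTaylor_seven_two_mul_lt_pade hx hx_lt_two
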